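/- arXiv:2212.01626 — 3 statements merged into one kernel-verified Lean document; each statement's English description precedes it below -/
import Mathlib

section
/- For every natural number k ≥ 0, the derivative of the polynomial γ_k satisfies γ_k′(t) = Σ_{j=1}^{k} (1/j)·γ_{k−j}(t) as an identity in ℚ[t]. (Interpretation: under the identification of K_0(P_n) with integer-valued polynomials sending O_{P_m} to γ_m, the operator D = d/dt sends O_{P_k} to O_{P_{k−1}} + (1/2)O_{P_{k−2}} + ⋯ + (1/k)O_{P_0}.) -/
/-!
Differentiating the recurrence `(m + 1) γ_{m+1} = (t + m + 1) γ_m` gives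
`(k + 1) γ'_{k+1} = γ_k + (t + k + 1) γ'_k`. The sums `Σ_{j=1}^k (1/j) γ_{k-j}` satisfy the same
recurrence: splitting `k + 1 = (k - j + 1) + j` in each term turns both sides into the same
sum plus `Σ_{i ≤ k} γ_i`. Both sides vanish at `k = 0`, so they agree for all `k`.
-/

open Polynomial

/-- `γ_m(t) = (t+1)(t+2)⋯(t+m)/m! ∈ ℚ[t]`, the binomial-coefficient polynomial
`C(t+m, m)` (so `γ_0 = 1`). -/
noncomputable def gam (m : ℕ) : ℚ[X] :=
  Polynomial.C ((m.factorial : ℚ))⁻¹ *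
    ∏ i ∈ Finset.range m, (Polynomial.X + Polynomial.C (i + 1 : ℚ))

open Finset

theorem Finset.sum_Icc_one_sub_eq_sum_range {M : Type*} [AddCommMonoid M] (f : ℕ → M) (n : ℕ) :
    ∑ j ∈ Icc 1 n, f (n - j) = ∑ i ∈ range n, f i := by
  rw [← Ico_add_one_right_eq_Icc, sum_Ico_reflect f 1 le_rfl, Nat.add_sub_cancel, Nat.sub_self,
    Nat.Ico_zero_eq_range]

theorem Polynomial.add_C_mul_C_inv_mul {K : Type*} [Field K] {a : K} (ha : a ≠ 0) (Y g : K[X]) :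
    (Y + C a) * (C a⁻¹ * g) = C a⁻¹ * (Y * g) + g := by
  have h : C a * C a⁻¹ = 1 := by rw [← C_mul, mul_inv_cancel₀ ha, C_1]
  linear_combination g * h

theorem C_mul_gam_succ (m : ℕ) :
    C ((m : ℚ) + 1) * gam (m + 1) = (X + C ((m : ℚ) + 1)) * gam m := by
  have hm : (m : ℚ) + 1 ≠ 0 := by positivity
  simp only [gam, Nat.factorial_succ, prod_range_succ, Nat.cast_mul, Nat.cast_succ, mul_inv]
  rw [← mul_assoc, ← C_mul, mul_inv_cancel_left₀ hm]
  ring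

theorem C_mul_derivative_gam_succ (k : ℕ) :
    C ((k : ℚ) + 1) * derivative (gam (k + 1)) =
      gam k + (X + C ((k : ℚ) + 1)) * derivative (gam k) := by
  rw [← derivative_C_mul, C_mul_gam_succ, derivative_mul]
  simp

theorem C_mul_sum_Icc_inv_mul_gam_succ (k : ℕ) :
    C ((k : ℚ) + 1) * ∑ j ∈ Icc 1 (k + 1), C ((j : ℚ))⁻¹ * gam (k + 1 - j) =
      gam k + (X + C ((k : ℚ) + 1)) * ∑ j ∈ Icc 1 k, C ((j : ℚ))⁻¹ * gam (k - j) := by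
  have hsplit : ∀ j ∈ Icc 1 k, (k : ℚ) + 1 = ((k - j : ℕ) : ℚ) + 1 + j := fun j hj => by
    rw [Nat.cast_sub (mem_Icc.1 hj).2]; ring
  have hj0 : ∀ j ∈ Icc 1 k, (j : ℚ) ≠ 0 := fun j hj => by
    have := (mem_Icc.1 hj).1; positivity
  have hlhs : ∀ j ∈ Icc 1 k, C ((k : ℚ) + 1) * (C (j : ℚ)⁻¹ * gam (k + 1 - j)) =
      C (j : ℚ)⁻¹ * (C (((k - j : ℕ) : ℚ) + 1) * gam (k - j + 1)) + gam (k - j + 1) := by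
    intro j hj
    rw [hsplit j hj, C_add, add_C_mul_C_inv_mul (hj0 j hj), Nat.sub_add_comm (mem_Icc.1 hj).2]
  have hrhs : ∀ j ∈ Icc 1 k, (X + C ((k : ℚ) + 1)) * (C (j : ℚ)⁻¹ * gam (k - j)) =
      C (j : ℚ)⁻¹ * (C (((k - j : ℕ) : ℚ) + 1) * gam (k - j + 1)) + gam (k - j) := by
    intro j hj
    rw [hsplit j hj, C_add, ← add_assoc, add_C_mul_C_inv_mul (hj0 j hj), C_mul_gam_succ]
  have htop : C ((k : ℚ) + 1) * (C ((k + 1 : ℕ) : ℚ)⁻¹ * gam (k + 1 - (k + 1))) = gam 0 := by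
    rw [Nat.sub_self, Nat.cast_succ, ← mul_assoc, ← C_mul, mul_inv_cancel₀ (by positivity), C_1,
      one_mul]
  have hsum : ∑ i ∈ range k, gam (i + 1) + gam 0 = gam k + ∑ i ∈ range k, gam i := by
    rw [← sum_range_succ', sum_range_succ, add_comm]
  rw [sum_Icc_succ_top (by omega), mul_add, mul_sum, mul_sum, sum_congr rfl hlhs,
    sum_congr rfl hrhs, sum_add_distrib, sum_add_distrib, htop,
    sum_Icc_one_sub_eq_sum_range (fun i => gam (i + 1)), sum_Icc_one_sub_eq_sum_range gam]
  linear_combination hsum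

/-- For every natural number `k ≥ 0`, the derivative of `γ_k` satisfies
`γ_k′(t) = Σ_{j=1}^{k} (1/j)·γ_{k-j}(t)` in `ℚ[t]`.
(Under the identification of `K₀(ℙ_n)` with integer-valued polynomials sending
`O_{ℙ_m}` to `γ_m`, the operator `D = d/dt` sends `O_{ℙ_k}` to
`O_{ℙ_{k-1}} + (1/2)O_{ℙ_{k-2}} + ⋯ + (1/k)O_{ℙ_0}`.) -/
theorem derivative_gam (k : ℕ) :
    Polynomial.derivative (gam k) =
      ∑ j ∈ Finset.Icc 1 k, Polynomial.C ((j : ℚ))⁻¹ * gam (k - j) := by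
  induction k with
  | zero => simp [gam]
  | succ k ih =>
    refine mul_left_cancel₀ (C_ne_zero.mpr (by positivity : (k : ℚ) + 1 ≠ 0)) ?_
    rw [C_mul_derivative_gam_succ, ih, ← C_mul_sum_Icc_inv_mul_gam_succ]
end

section
/- For every natural number m and every integer k, the identity C(t+m+k, m) = C(t+m, m) + C(k, 1)·C(t+m−1, m−1) + C(k+1, 2)·C(t+m−2, m−2) + ⋯ + C(k+m−1, m)·C(t, 0) holds; precisely, as an identity of polynomials in ℚ[t]: γ_m(t+k) = Σ_{j=0}^{m} C(k+j−1, j)·γ_{m−j}(t), where C(a, j) = a(a−1)⋯(a−j+1)/j! is the generalized binomial coefficient of an integer a. (Interpretation: O(k) ⊗ O_{P_m} = O_{P_m} + k·O_{P_{m−1}} + C(k+1, 2)·O_{P_{m−2}} + ⋯ + C(k+m−1, m)·O_{P_0} in K_0(P_n).) -/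
open Polynomial

lemma gam_succ_back (m : ℕ) :
    gam (m+1) = C (((m:ℚ)+1))⁻¹ * (gam m * (X + C ((m:ℚ)+1))) := by
  unfold gam
  rw [Finset.prod_range_succ]
  have h : (((m+1).factorial : ℚ))⁻¹ = ((m:ℚ)+1)⁻¹ * ((m.factorial:ℚ))⁻¹ := by
    rw [Nat.factorial_succ]; push_cast; rw [mul_inv]
  rw [h, C_mul]
  ring

lemma gam_succ_front (m : ℕ) :
    gam (m+1) = C (((m:ℚ)+1))⁻¹ * ((gam m).comp (X + C (1:ℚ)) * (X + C (1:ℚ))) := by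
  unfold gam
  rw [Finset.prod_range_succ']
  simp only [mul_comp, C_comp, Polynomial.prod_comp, add_comp, X_comp]
  have h : (((m+1).factorial : ℚ))⁻¹ = ((m:ℚ)+1)⁻¹ * ((m.factorial:ℚ))⁻¹ := by
    rw [Nat.factorial_succ]; push_cast; rw [mul_inv]
  have hQ : ∏ i ∈ Finset.range m, (X + C (((i+1:ℕ) : ℚ)+1)) =
      ∏ i ∈ Finset.range m, (X + C (1:ℚ) + C ((i:ℚ)+1)) := by
    refine Finset.prod_congr rfl fun i _ => ?_
    push_cast
    rw [C_add]
    ring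
  rw [h, C_mul, hQ]
  simp only [Nat.cast_zero, zero_add]
  ring

lemma gam_succ_one (m : ℕ) :
    (gam (m+1)).comp (X + C (1:ℚ)) = gam (m+1) + (gam m).comp (X + C (1:ℚ)) := by
  have hC : C ((((m:ℚ)+1))⁻¹) * C ((m:ℚ)+1) = 1 := by
    rw [← C_mul, inv_mul_cancel₀ (by positivity), C_1]
  nth_rw 1 [gam_succ_back]
  nth_rw 1 [gam_succ_front]
  simp only [mul_comp, C_comp, add_comp, X_comp]
  linear_combination ((gam m).comp (X + C (1:ℚ))) * hC

lemma comp_add_one (a : ℚ) : (X + C (1:ℚ)).comp (X + C a) = X + C (a+1) := by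
  simp only [add_comp, X_comp, C_comp]
  rw [add_assoc, ← C_add]

lemma gam_shift (m : ℕ) (a : ℚ) :
    (gam (m+1)).comp (X + C (a+1)) =
      (gam (m+1)).comp (X + C a) + (gam m).comp (X + C (a+1)) := by
  calc (gam (m+1)).comp (X + C (a+1))
      = ((gam (m+1)).comp (X + C (1:ℚ))).comp (X + C a) := by
        rw [comp_assoc, comp_add_one]
    _ = (gam (m+1)).comp (X + C a) + (gam m).comp (X + C (a+1)) := by
        rw [gam_succ_one, add_comp, comp_assoc, comp_add_one]

lemma hsum_aux (m : ℕ) (k : ℤ) :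
    ∑ j ∈ Finset.range (m+2), C (((Ring.choose ((k+1) + j - 1) j : ℤ)) : ℚ) * gam (m+1-j)
      = ∑ j ∈ Finset.range (m+2), C (((Ring.choose (k + j - 1) j : ℤ)) : ℚ) * gam (m+1-j)
      + ∑ j ∈ Finset.range (m+1), C (((Ring.choose ((k+1) + j - 1) j : ℤ)) : ℚ) * gam (m - j) := by
  rw [Finset.sum_range_succ' _ (m+1),
    Finset.sum_range_succ' (fun j => C (((Ring.choose (k + j - 1) j : ℤ)) : ℚ) * gam (m+1-j)) (m+1)]
  simp only [Nat.cast_zero, add_zero, Ring.choose_zero_right, Nat.sub_zero, Int.cast_one, map_one,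
    one_mul, Nat.succ_sub_succ_eq_sub]
  rw [add_right_comm, ← Finset.sum_add_distrib]
  congr 1
  refine Finset.sum_congr rfl fun j hj => ?_
  have e1 : (k + 1 + ↑(j+1) - 1 : ℤ) = (k + ↑j) + 1 := by push_cast; ring
  have e2 : (k + ↑(j+1) - 1 : ℤ) = k + ↑j := by push_cast; ring
  have e3 : (k + 1 + ↑j - 1 : ℤ) = k + ↑j := by push_cast; ring
  rw [e1, e2, e3, Ring.choose_succ_succ (k + (j:ℤ)) j]
  push_cast
  rw [C_add]
  ring

lemma step_aux (m : ℕ) (k : ℤ)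
    (hm : (gam m).comp (X + C ((k+1 : ℤ) : ℚ)) =
      ∑ j ∈ Finset.range (m+1), C (((Ring.choose ((k+1) + j - 1) j : ℤ)) : ℚ) * gam (m - j)) :
    ((gam (m+1)).comp (X + C ((k+1 : ℤ) : ℚ)) =
        ∑ j ∈ Finset.range (m+2), C (((Ring.choose ((k+1) + j - 1) j : ℤ)) : ℚ) * gam (m+1 - j))
    ↔ ((gam (m+1)).comp (X + C ((k : ℤ) : ℚ)) =
        ∑ j ∈ Finset.range (m+2), C (((Ring.choose (k + j - 1) j : ℤ)) : ℚ) * gam (m+1 - j)) := by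
  have hshift := gam_shift m (k : ℚ)
  have hc : ((k+1 : ℤ) : ℚ) = (k : ℚ) + 1 := by push_cast; ring
  rw [hc] at hm
  have hsum := hsum_aux m k
  constructor <;> intro h
  · rw [hc] at h
    linear_combination h - hshift + hsum - hm
  · rw [hc]
    linear_combination h + hshift - hsum + hm


/-- For every natural number `m` and every integer `k`, as polynomials in `ℚ[t]`:
`γ_m(t+k) = Σ_{j=0}^{m} C(k+j-1, j)·γ_{m-j}(t)`, where `C(a, j)` is the generalized
binomial coefficient (`Ring.choose` on `ℤ`) of an integer `a`.
(In `K₀(ℙ_n)`: `O(k) ⊗ O_{ℙ_m} = O_{ℙ_m} + k·O_{ℙ_{m-1}} + C(k+1,2)·O_{ℙ_{m-2}} + ⋯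
+ C(k+m-1, m)·O_{ℙ_0}`.) -/
theorem gam_shift_eq_sum (m : ℕ) (k : ℤ) :
    (gam m).comp (Polynomial.X + Polynomial.C (k : ℚ)) =
      ∑ j ∈ Finset.range (m + 1),
        Polynomial.C ((Ring.choose (k + j - 1) j : ℤ) : ℚ) * gam (m - j) := by
  induction m generalizing k with
  | zero =>
    simp [gam, Ring.choose_zero_right]
  | succ m ih =>
    induction k using Int.induction_on with
    | zero =>
      simp only [Int.cast_zero, map_zero, add_zero, comp_X]
      rw [Finset.sum_range_succ']
      have hz : ∀ j ∈ Finset.range (m+1),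
          C (((Ring.choose ((0:ℤ) + ↑(j+1) - 1) (j+1) : ℤ)) : ℚ) * gam (m+1-(j+1)) = 0 := by
        intro j _
        have e : ((0:ℤ) + ↑(j+1) - 1) = (j : ℤ) := by push_cast; ring
        rw [e, Ring.choose_natCast, Nat.choose_eq_zero_of_lt (Nat.lt_succ_self j)]
        simp
      rw [Finset.sum_congr rfl hz, Finset.sum_const_zero, zero_add]
      simp [Ring.choose_zero_right]
    | succ i hk =>
      have := (step_aux m i (ih (i+1))).mpr
      exact_mod_cast this (by exact_mod_cast hk)
    | pred i hk =>
      have := (step_aux m (-i-1) (ih (-i-1+1))).mp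
      have e : (-i-1+1 : ℤ) = -(i:ℤ) := by ring
      rw [e] at this
      have := this (by exact_mod_cast hk)
      exact_mod_cast this
end

section
/- Let V be a finite-dimensional vector space over a field K equipped with a nondegenerate bilinear form B, and let κ be the (unique) linear endomorphism of V with B(u, v) = B(v, κu) for all u, v ∈ V. Let φ be a linear endomorphism of V, and let ℓ and r be the (unique) endomorphisms satisfying B(ℓu, v) = B(u, φv) and B(u, rv) = B(φu, v) for all u, v ∈ V (the left and right adjoints of φ). Then ℓ = r if and only if κ ∘ φ = φ ∘ κ. -/
/-!
Reading both composites through the form gives `B(v, κ(φ u)) = B(u, r v)` and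
`B(v, φ(κ u)) = B(u, ℓ v)`. Since every functional is some `B x`, the form separates points in its
second argument, so `κ ∘ φ = φ ∘ κ` and `ℓ = r` both amount to the equality of these two expressions
for all `u, v`.
-/

namespace LinearMap

variable {R M N P Q : Type*} [CommSemiring R]

theorem separatingRight_of_surjective [AddCommMonoid M] [Module R M] [AddCommMonoid N]
    [Module R N] [Module.Projective R N] {B : M →ₗ[R] N →ₗ[R] R} (hB : Function.Surjective B) :
    B.SeparatingRight := fun y hy =>
  (Module.forall_dual_apply_eq_zero_iff R y).1 fun f => by
    obtain ⟨x, rfl⟩ := hB f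
    exact hy x

theorem SeparatingRight.ext_iff [AddCommMonoid M] [Module R M] [AddCommGroup N] [Module R N]
    [AddCommGroup P] [Module R P] [AddCommMonoid Q] [Module R Q] {B : M →ₗ[R] N →ₗ[R] P}
    (hB : B.SeparatingRight) {f g : Q →ₗ[R] N} : f = g ↔ ∀ q x, B x (f q) = B x (g q) := by
  refine ⟨by rintro rfl; simp, fun h => ext fun q => sub_eq_zero.1 <| hB _ fun x => ?_⟩
  rw [map_sub, h, sub_self]

end LinearMap

theorem left_adjoint_eq_right_adjoint_iff_commutes_with_canonical_general
    (K V : Type*) [Field K] [AddCommGroup V] [Module K V]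
    (B : V →ₗ[K] V →ₗ[K] K)
    (hB : Function.Bijective (B : V → V →ₗ[K] K))
    (κ : V →ₗ[K] V) (hκ : ∀ u v : V, B u v = B v (κ u))
    (φ ℓ r : V →ₗ[K] V)
    (hℓ : ∀ u v : V, B (ℓ u) v = B u (φ v))
    (hr : ∀ u v : V, B u (r v) = B (φ u) v) :
    ℓ = r ↔ κ ∘ₗ φ = φ ∘ₗ κ := by
  have hsep := LinearMap.separatingRight_of_surjective hB.2
  have hκφ : ∀ u v, B v (κ (φ u)) = B u (r v) := fun u v => by rw [← hκ, hr]
  have hφκ : ∀ u v, B v (φ (κ u)) = B u (ℓ v) := fun u v => by rw [← hℓ, ← hκ]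
  rw [hsep.ext_iff, hsep.ext_iff]
  simp only [LinearMap.comp_apply, hκφ, hφκ]
  exact ⟨fun h u v => (h v u).symm, fun h v u => (h u v).symm⟩

/-- Let `V` be a finite-dimensional vector space over a field `K` with a nondegenerate
bilinear form `B` (its induced map `V → V*` is bijective), and let `κ` be the unique
endomorphism with `B(u, v) = B(v, κu)` for all `u, v`. If `ℓ` and `r` are the left
and right adjoints of an endomorphism `φ` (so `B(ℓu, v) = B(u, φv)` and
`B(u, rv) = B(φu, v)` for all `u, v`), then `ℓ = r` iff `κ ∘ φ = φ ∘ κ`. -/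
theorem left_adjoint_eq_right_adjoint_iff_commutes_with_canonical
    (K V : Type*) [Field K] [AddCommGroup V] [Module K V] [FiniteDimensional K V]
    (B : V →ₗ[K] V →ₗ[K] K)
    (hB : Function.Bijective (B : V → V →ₗ[K] K))
    (κ : V →ₗ[K] V) (hκ : ∀ u v : V, B u v = B v (κ u))
    (φ ℓ r : V →ₗ[K] V)
    (hℓ : ∀ u v : V, B (ℓ u) v = B u (φ v))
    (hr : ∀ u v : V, B u (r v) = B (φ u) v) :
    ℓ = r ↔ κ ∘ₗ φ = φ ∘ₗ κ :=
  left_adjoint_eq_right_adjoint_iff_commutes_with_canonical_general K V B hB κ hκ φ ℓ r hℓ hr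
end
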